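/- (Corollary 5.5, simplified a priori error bound, ℓ∞ version.) Suppose the weighting matrix is the identity, W̄ = I_{N·N_t}. Let x be a space-time function with r̄(x) = 0, and let x̃ ∈ S satisfy ‖r̄(x̃)‖₂ ≤ ‖r̄(w)‖₂ for all w ∈ S. Assume there exists s_A > 0 with ‖A_LM z‖₂ ≥ s_A ‖z‖₂ for all z ∈ ℝ^{N·N_t}, that σ_max(A_LM) ≥ s_A, and that Δt · L_f · σ_max(B_LM) < s_A. Define the Lebesgue constant Λ := (σ_max(A_LM) − s_A + 2·Δt·L_f·σ_max(B_LM)) / (s_A − Δt·L_f·σ_max(B_LM)). Then for every w ∈ S, max_{n ∈ Fin N_t} ‖x(n) − x̃(n)‖₂ ≤ √N_t · (1 + Λ) · max_{n ∈ Fin N_t} ‖x(n) − w(n)‖₂. -/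

import Mathlib

/-!
Write `ε = Δt L_f σ_max(B_LM)`. Since `r̄(u) - r̄(v) = A_LM (vec u - vec v) - Δt B_LM (F̄ u - F̄ v)`
and `F̄` is `L_f`-Lipschitz in the stacked ℓ² norm, the residual is bi-Lipschitz:
`(s_A - ε) ‖vec u - vec v‖ ≤ ‖r̄ u - r̄ v‖ ≤ (σ_max(A_LM) + ε) ‖vec u - vec v‖`.
As `r̄(x) = 0` and `x̃` minimises `‖r̄‖` over `S`, this gives the ℓ² quasi-optimality
`‖vec (x - x̃)‖ ≤ (1 + Λ) ‖vec (x - w)‖`, and the ℓ∞ bound follows from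
`‖·‖_∞ ≤ ‖·‖₂ ≤ √N_t ‖·‖_∞` for space-time functions.
-/

noncomputable section

/-- A space-time function. -/
abbrev SpaceTime (N Nt : ℕ) := Fin Nt → EuclideanSpace ℝ (Fin N)

/-- Vectorization of a space-time function: stacks the blocks `w 0, …, w (Nt-1)`
into a single Euclidean vector of dimension `N * Nt`. -/
def vec {N Nt : ℕ} (w : SpaceTime N Nt) : EuclideanSpace ℝ (Fin Nt × Fin N) :=
  (WithLp.equiv 2 _).symm (fun p => w p.1 p.2)

/-- The largest singular value (ℓ² operator norm) of a real matrix. -/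
def sigmaMax {m n : Type*} [Fintype m] [Fintype n] [DecidableEq n] (M : Matrix m n ℝ) : ℝ :=
  ‖LinearMap.toContinuousLinearMap (Matrix.toEuclideanLin M)‖

/-- Matrix–vector multiplication as a map between Euclidean spaces. -/
def mulVecE {m n : Type*} [Fintype m] [Fintype n] [DecidableEq n] (M : Matrix m n ℝ)
    (v : EuclideanSpace ℝ n) : EuclideanSpace ℝ m :=
  Matrix.toEuclideanLin M v

/-- The stacked velocity `F̄(w)`: vectorization of `n ↦ f (w n, t n)`. -/
def Fbar {N Nt : ℕ} (f : EuclideanSpace ℝ (Fin N) × ℝ → EuclideanSpace ℝ (Fin N))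
    (t : Fin Nt → ℝ) (w : SpaceTime N Nt) : EuclideanSpace ℝ (Fin Nt × Fin N) :=
  vec (fun n => f (w n, t n))

/-- The space-time linear multistep residual `r̄(w) = A_LM vec(w) − Δt B_LM F̄(w) + b`. -/
def resid {N Nt : ℕ} (A_LM B_LM : Matrix (Fin Nt × Fin N) (Fin Nt × Fin N) ℝ)
    (b : EuclideanSpace ℝ (Fin Nt × Fin N)) (Δt : ℝ)
    (f : EuclideanSpace ℝ (Fin N) × ℝ → EuclideanSpace ℝ (Fin N))
    (t : Fin Nt → ℝ) (w : SpaceTime N Nt) : EuclideanSpace ℝ (Fin Nt × Fin N) :=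
  mulVecE A_LM (vec w) - Δt • mulVecE B_LM (Fbar f t w) + b

section SigmaMax

variable {m n : Type*} [Fintype m] [Fintype n] [DecidableEq n]

lemma sigmaMax_nonneg (M : Matrix m n ℝ) : 0 ≤ sigmaMax M := norm_nonneg _

lemma norm_mulVecE_le (M : Matrix m n ℝ) (v : EuclideanSpace ℝ n) :
    ‖mulVecE M v‖ ≤ sigmaMax M * ‖v‖ :=
  (LinearMap.toContinuousLinearMap (Matrix.toEuclideanLin M)).le_opNorm v

end SigmaMax

section Vec

variable {N Nt : ℕ}

lemma vec_sub (u v : SpaceTime N Nt) : vec u - vec v = vec (u - v) := rfl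

lemma norm_vec_sq (z : SpaceTime N Nt) : ‖vec z‖ ^ 2 = ∑ n, ‖z n‖ ^ 2 := by
  rw [EuclideanSpace.norm_eq, Real.sq_sqrt (by positivity), Fintype.sum_prod_type]
  refine Finset.sum_congr rfl fun n _ => ?_
  rw [EuclideanSpace.norm_eq, Real.sq_sqrt (by positivity)]
  rfl

lemma norm_le_norm_vec (z : SpaceTime N Nt) (n : Fin Nt) : ‖z n‖ ≤ ‖vec z‖ := by
  rw [← sq_le_sq₀ (norm_nonneg _) (norm_nonneg _), norm_vec_sq]
  exact Finset.single_le_sum (f := fun m => ‖z m‖ ^ 2) (fun _ _ => by positivity)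
    (Finset.mem_univ n)

lemma iSup_norm_le_norm_vec (z : SpaceTime N Nt) : ⨆ n, ‖z n‖ ≤ ‖vec z‖ :=
  Real.iSup_le (norm_le_norm_vec z) (norm_nonneg _)

lemma norm_vec_le_sqrt_mul_iSup_norm (z : SpaceTime N Nt) :
    ‖vec z‖ ≤ Real.sqrt Nt * ⨆ n, ‖z n‖ := by
  have hle : ∀ n, ‖z n‖ ≤ ⨆ n, ‖z n‖ := le_ciSup (Set.finite_range _).bddAbove
  have hnonneg : 0 ≤ ⨆ n, ‖z n‖ := Real.iSup_nonneg fun n => norm_nonneg (z n)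
  rw [← sq_le_sq₀ (norm_nonneg _) (by positivity), norm_vec_sq, mul_pow,
    Real.sq_sqrt (Nat.cast_nonneg Nt)]
  calc ∑ n, ‖z n‖ ^ 2 ≤ ∑ _n : Fin Nt, (⨆ n, ‖z n‖) ^ 2 :=
        Finset.sum_le_sum fun n _ => pow_le_pow_left₀ (norm_nonneg _) (hle n) 2
    _ = Nt * (⨆ n, ‖z n‖) ^ 2 := by simp

lemma norm_vec_le_of_forall_norm_le {K : ℝ} (hK : 0 ≤ K) {z y : SpaceTime N Nt}
    (h : ∀ n, ‖z n‖ ≤ K * ‖y n‖) : ‖vec z‖ ≤ K * ‖vec y‖ := by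
  rw [← sq_le_sq₀ (norm_nonneg _) (by positivity), mul_pow, norm_vec_sq, norm_vec_sq,
    Finset.mul_sum]
  refine Finset.sum_le_sum fun n _ => ?_
  rw [← mul_pow]
  exact pow_le_pow_left₀ (norm_nonneg _) (h n) 2

end Vec

section Residual

variable {N Nt : ℕ} {A_LM B_LM : Matrix (Fin Nt × Fin N) (Fin Nt × Fin N) ℝ}
  {b : EuclideanSpace ℝ (Fin Nt × Fin N)} {Δt : ℝ}
  {f : EuclideanSpace ℝ (Fin N) × ℝ → EuclideanSpace ℝ (Fin N)} {t : Fin Nt → ℝ} {L_f : ℝ}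

lemma norm_Fbar_sub_le (hLf : 0 ≤ L_f)
    (hlip : ∀ (u v : EuclideanSpace ℝ (Fin N)) (n : Fin Nt),
      ‖f (u, t n) - f (v, t n)‖ ≤ L_f * ‖u - v‖) (u v : SpaceTime N Nt) :
    ‖Fbar f t u - Fbar f t v‖ ≤ L_f * ‖vec u - vec v‖ := by
  rw [Fbar, Fbar, vec_sub, vec_sub]
  exact norm_vec_le_of_forall_norm_le hLf fun n => hlip (u n) (v n) n

lemma resid_sub_resid (u v : SpaceTime N Nt) :
    resid A_LM B_LM b Δt f t u - resid A_LM B_LM b Δt f t v =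
      mulVecE A_LM (vec u - vec v) - Δt • mulVecE B_LM (Fbar f t u - Fbar f t v) := by
  simp only [resid, mulVecE, map_sub, smul_sub]
  abel

lemma norm_smul_mulVecE_Fbar_sub_le (hΔt : 0 ≤ Δt) (hLf : 0 ≤ L_f)
    (hlip : ∀ (u v : EuclideanSpace ℝ (Fin N)) (n : Fin Nt),
      ‖f (u, t n) - f (v, t n)‖ ≤ L_f * ‖u - v‖) (u v : SpaceTime N Nt) :
    ‖Δt • mulVecE B_LM (Fbar f t u - Fbar f t v)‖ ≤
      Δt * L_f * sigmaMax B_LM * ‖vec u - vec v‖ := by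
  rw [norm_smul, Real.norm_of_nonneg hΔt]
  calc Δt * ‖mulVecE B_LM (Fbar f t u - Fbar f t v)‖
      ≤ Δt * (sigmaMax B_LM * (L_f * ‖vec u - vec v‖)) :=
        mul_le_mul_of_nonneg_left ((norm_mulVecE_le _ _).trans
          (mul_le_mul_of_nonneg_left (norm_Fbar_sub_le hLf hlip u v) (sigmaMax_nonneg _))) hΔt
    _ = Δt * L_f * sigmaMax B_LM * ‖vec u - vec v‖ := by ring

lemma sub_mul_norm_vec_sub_le_norm_resid_sub (hΔt : 0 ≤ Δt) (hLf : 0 ≤ L_f)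
    (hlip : ∀ (u v : EuclideanSpace ℝ (Fin N)) (n : Fin Nt),
      ‖f (u, t n) - f (v, t n)‖ ≤ L_f * ‖u - v‖) {sA : ℝ}
    (hAlow : ∀ z : EuclideanSpace ℝ (Fin Nt × Fin N), sA * ‖z‖ ≤ ‖mulVecE A_LM z‖)
    (u v : SpaceTime N Nt) :
    (sA - Δt * L_f * sigmaMax B_LM) * ‖vec u - vec v‖ ≤
      ‖resid A_LM B_LM b Δt f t u - resid A_LM B_LM b Δt f t v‖ := by
  rw [resid_sub_resid]
  have hA := hAlow (vec u - vec v)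
  have hB := norm_smul_mulVecE_Fbar_sub_le (B_LM := B_LM) hΔt hLf hlip u v
  have := norm_sub_norm_le (mulVecE A_LM (vec u - vec v))
    (Δt • mulVecE B_LM (Fbar f t u - Fbar f t v))
  linarith

lemma norm_resid_sub_le (hΔt : 0 ≤ Δt) (hLf : 0 ≤ L_f)
    (hlip : ∀ (u v : EuclideanSpace ℝ (Fin N)) (n : Fin Nt),
      ‖f (u, t n) - f (v, t n)‖ ≤ L_f * ‖u - v‖) (u v : SpaceTime N Nt) :
    ‖resid A_LM B_LM b Δt f t u - resid A_LM B_LM b Δt f t v‖ ≤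
      (sigmaMax A_LM + Δt * L_f * sigmaMax B_LM) * ‖vec u - vec v‖ := by
  rw [resid_sub_resid]
  calc _ ≤ ‖mulVecE A_LM (vec u - vec v)‖ + ‖Δt • mulVecE B_LM (Fbar f t u - Fbar f t v)‖ :=
        norm_sub_le _ _
    _ ≤ sigmaMax A_LM * ‖vec u - vec v‖ + Δt * L_f * sigmaMax B_LM * ‖vec u - vec v‖ :=
        add_le_add (norm_mulVecE_le _ _) (norm_smul_mulVecE_Fbar_sub_le hΔt hLf hlip u v)
    _ = _ := by ring

end Residual

theorem simplified_apriori_linf_bound_general {N Nt : ℕ}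
    (t : Fin Nt → ℝ) (Δt : ℝ) (hΔt : 0 < Δt)
    (A_LM B_LM : Matrix (Fin Nt × Fin N) (Fin Nt × Fin N) ℝ)
    (b : EuclideanSpace ℝ (Fin Nt × Fin N))
    (f : EuclideanSpace ℝ (Fin N) × ℝ → EuclideanSpace ℝ (Fin N))
    (L_f : ℝ) (hLf : 0 ≤ L_f)
    (hlip : ∀ (u v : EuclideanSpace ℝ (Fin N)) (n : Fin Nt),
      ‖f (u, t n) - f (v, t n)‖ ≤ L_f * ‖u - v‖)
    (S : Set (SpaceTime N Nt))
    (x : SpaceTime N Nt) (hx : resid A_LM B_LM b Δt f t x = 0)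
    (xt : SpaceTime N Nt)
    (hopt : ∀ w ∈ S, ‖resid A_LM B_LM b Δt f t xt‖ ≤ ‖resid A_LM B_LM b Δt f t w‖)
    (sA : ℝ)
    (hAlow : ∀ z : EuclideanSpace ℝ (Fin Nt × Fin N), sA * ‖z‖ ≤ ‖mulVecE A_LM z‖)
    (hdt : Δt * L_f * sigmaMax B_LM < sA) :
    ∀ w ∈ S, (⨆ n : Fin Nt, ‖x n - xt n‖) ≤
      Real.sqrt Nt * (1 + (sigmaMax A_LM - sA + 2 * Δt * L_f * sigmaMax B_LM) /
        (sA - Δt * L_f * sigmaMax B_LM)) * ⨆ n : Fin Nt, ‖x n - w n‖ := by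
  intro w hw
  set r := resid A_LM B_LM b Δt f t
  set ε := Δt * L_f * sigmaMax B_LM
  have hden : 0 < sA - ε := sub_pos.mpr hdt
  have hΛ : 1 + (sigmaMax A_LM - sA + 2 * Δt * L_f * sigmaMax B_LM) / (sA - ε) =
      (sigmaMax A_LM + ε) / (sA - ε) := by
    field_simp
    ring
  have hΛ_nonneg : 0 ≤ (sigmaMax A_LM + ε) / (sA - ε) :=
    div_nonneg (add_nonneg (sigmaMax_nonneg _)
      (mul_nonneg (mul_nonneg hΔt.le hLf) (sigmaMax_nonneg _))) hden.le
  have hquasiopt : ‖vec x - vec xt‖ ≤ (sigmaMax A_LM + ε) / (sA - ε) * ‖vec x - vec w‖ := by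
    rw [div_mul_eq_mul_div, le_div_iff₀ hden, mul_comm]
    calc (sA - ε) * ‖vec x - vec xt‖ ≤ ‖r x - r xt‖ :=
          sub_mul_norm_vec_sub_le_norm_resid_sub hΔt.le hLf hlip hAlow x xt
      _ = ‖r xt‖ := by rw [hx, zero_sub, norm_neg]
      _ ≤ ‖r w‖ := hopt w hw
      _ = ‖r x - r w‖ := by rw [hx, zero_sub, norm_neg]
      _ ≤ (sigmaMax A_LM + ε) * ‖vec x - vec w‖ := norm_resid_sub_le hΔt.le hLf hlip x w
  rw [hΛ]
  calc (⨆ n, ‖x n - xt n‖) ≤ ‖vec x - vec xt‖ := iSup_norm_le_norm_vec (x - xt)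
    _ ≤ (sigmaMax A_LM + ε) / (sA - ε) * (Real.sqrt Nt * ⨆ n, ‖x n - w n‖) :=
        hquasiopt.trans (mul_le_mul_of_nonneg_left (norm_vec_le_sqrt_mul_iSup_norm (x - w))
          hΛ_nonneg)
    _ = _ := by ring

/-- Corollary 5.5, ℓ∞ version: simplified a priori error bound
for the unweighted (identity weighting matrix) case. -/
theorem simplified_apriori_linf_bound {N Nt : ℕ} (hN : 1 ≤ N) (hNt : 1 ≤ Nt)
    (t : Fin Nt → ℝ) (Δt : ℝ) (hΔt : 0 < Δt)
    (A_LM B_LM : Matrix (Fin Nt × Fin N) (Fin Nt × Fin N) ℝ)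
    (b : EuclideanSpace ℝ (Fin Nt × Fin N))
    (f : EuclideanSpace ℝ (Fin N) × ℝ → EuclideanSpace ℝ (Fin N))
    (L_f : ℝ) (hLf : 0 ≤ L_f)
    (hlip : ∀ (u v : EuclideanSpace ℝ (Fin N)) (n : Fin Nt),
      ‖f (u, t n) - f (v, t n)‖ ≤ L_f * ‖u - v‖)
    (S : Set (SpaceTime N Nt))
    (x : SpaceTime N Nt) (hx : resid A_LM B_LM b Δt f t x = 0)
    (xt : SpaceTime N Nt) (hxtS : xt ∈ S)
    (hopt : ∀ w ∈ S, ‖resid A_LM B_LM b Δt f t xt‖ ≤ ‖resid A_LM B_LM b Δt f t w‖)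
    (sA : ℝ) (hsA : 0 < sA)
    (hAlow : ∀ z : EuclideanSpace ℝ (Fin Nt × Fin N), sA * ‖z‖ ≤ ‖mulVecE A_LM z‖)
    (hAup : sA ≤ sigmaMax A_LM)
    (hdt : Δt * L_f * sigmaMax B_LM < sA) :
    ∀ w ∈ S, (⨆ n : Fin Nt, ‖x n - xt n‖) ≤
      Real.sqrt Nt * (1 + (sigmaMax A_LM - sA + 2 * Δt * L_f * sigmaMax B_LM) /
        (sA - Δt * L_f * sigmaMax B_LM)) * ⨆ n : Fin Nt, ‖x n - w n‖ :=
  simplified_apriori_linf_bound_general t Δt hΔt A_LM B_LM b f L_f hLf hlip S x hx xt hopt sA hAlow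
    hdt
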